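/- For every k ∈ ℕ, extension preservation holds over the class SC(k): every first-order sentence in the language of graphs that is preserved by embeddings over SC(k) is equivalent over SC(k) to an existential sentence. -/

import Mathlib

open FirstOrder Language

/-- Satisfaction of a first-order sentence in the language of graphs by a simple graph. -/
def GSat {V : Type} (G : SimpleGraph V) (φ : Language.graph.Sentence) : Prop :=
  @Sentence.Realize Language.graph V G.structure φ

/-- A sentence is existential if it has the form `∃ x₁ … xₙ θ` with `θ` quantifier-free. -/
def IsExistentialSentence {L : Language} (ψ : L.Sentence) : Prop :=
  ∃ (n : ℕ) (θ : L.BoundedFormula Empty n), θ.IsQF ∧ ψ = θ.exs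

/-- Closure of a class of graphs under (iterated, hence `n`-ary) disjoint unions. -/
inductive DSum (Q : ∀ V : Type, SimpleGraph V → Prop) : ∀ V : Type, SimpleGraph V → Prop
  | of {V : Type} {G : SimpleGraph V} : Q V G → DSum Q V G
  | union {V W : Type} {G : SimpleGraph V} {H : SimpleGraph W} :
      DSum Q V G → DSum Q W H → DSum Q (V ⊕ W) (G ⊕g H)

/-- The graph obtained from `H` by complementing the edges inside `X` (distinct `u, v ∈ X`
become adjacent iff they were not adjacent), leaving all other pairs unchanged. -/
def flipWithin {V : Type} (H : SimpleGraph V) (X : Set V) : SimpleGraph V where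
  Adj x y := x ≠ y ∧ ¬(H.Adj x y ↔ (x ∈ X ∧ y ∈ X))
  symm := by
    constructor
    intro x y ⟨hne, h⟩
    refine ⟨hne.symm, fun h' => h ?_⟩
    rw [SimpleGraph.adj_comm, and_comm]
    exact h'
  loopless := ⟨fun x h => h.1 rfl⟩

/-- The classes `SC(k)`, up to isomorphism: `SC(0) = {K₁}`, and `SC(k+1)` consists of the
graphs obtained from a disjoint union of members of `SC(k)` by complementing the edges inside
some set `X` of vertices. -/
def SCk : ℕ → ∀ V : Type, SimpleGraph V → Prop
  | 0 => fun _ G => Nonempty (G ≃g (⊥ : SimpleGraph Unit))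
  | k + 1 => fun _ G => ∃ (W : Type) (H : SimpleGraph W) (X : Set W),
      DSum (SCk k) W H ∧ Nonempty (G ≃g flipWithin H X)

/-!
A class of finite nonempty graphs that is well-quasi-ordered by embeddings has extension
preservation: the models of `φ` in the class have a finite basis under embeddability, and `φ` is
equivalent over the class to the existential sentence saying that some basis graph embeds.

To see that `SC(k)` is well-quasi-ordered, code each vertex by its path through the construction:
at every level, the index of the summand containing it and whether it lies in the flipped set.
Adjacency is a function of the two paths, so an injection of code sets that keeps the flip bits and
the pattern of common index prefixes is a graph embedding. Such injections are assembled from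
injections between summands, and Higman's lemma on lists of summands gives, by induction on `k`,
that code sets are well-quasi-ordered.
-/

theorem Set.PartiallyWellOrderedOn.exists_finset_basis {α : Type*} {s : Set α}
    {r : α → α → Prop} (h : s.PartiallyWellOrderedOn r) :
    ∃ F : Finset α, ↑F ⊆ s ∧ ∀ x ∈ s, ∃ y ∈ F, r y x := by
  by_contra! hbad
  obtain ⟨f, hfs, hf⟩ := exists_seq_of_forall_finset_exists (· ∈ s) (fun y x => ¬r y x) hbad
  obtain ⟨m, n, hmn, hr⟩ := h.exists_lt hfs
  exact hf m n hmn hr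

theorem List.SublistForall₂.of_map {α β γ δ : Type*} {R : α → β → Prop} {f : γ → α}
    {g : δ → β} {l₁ : List γ} {l₂ : List δ} (h : SublistForall₂ R (l₁.map f) (l₂.map g)) :
    SublistForall₂ (fun a b => R (f a) (g b)) l₁ l₂ := by
  obtain ⟨l, hl, hsub⟩ := sublistForall₂_iff.1 h
  obtain ⟨l', hl', rfl⟩ := sublist_map_iff.1 hsub
  exact sublistForall₂_iff.2 ⟨l', forall₂_map_left_iff.1 (forall₂_map_right_iff.1 hl), hl'⟩

theorem List.SublistForall₂.exists_injOn {α β : Type*} [Nonempty β] {R : α → β → Prop}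
    {l₁ : List α} {l₂ : List β} (h : SublistForall₂ R l₁ l₂) (hl₂ : l₂.Nodup) :
    ∃ σ : α → β, Set.InjOn σ {a | a ∈ l₁} ∧ ∀ a ∈ l₁, σ a ∈ l₂ ∧ R a (σ a) := by
  classical
  induction h with
  | nil => exact ⟨fun _ => Classical.arbitrary β, by simp, by simp⟩
  | @cons a b l₁ l₂ hab _ ih =>
    obtain ⟨hb, hl₂⟩ := List.nodup_cons.1 hl₂
    obtain ⟨σ, hσ, hσR⟩ := ih hl₂
    have hσb : ∀ x ∈ l₁, x ≠ a → Function.update σ a b x ∈ l₂ ∧ R x (Function.update σ a b x) :=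
      fun x hx hxa => by simpa [Function.update_of_ne hxa] using hσR x hx
    refine ⟨Function.update σ a b, fun x hx y hy hxy => ?_, fun x hx => ?_⟩
    · simp only [Set.mem_ofPred_eq, List.mem_cons] at hx hy
      by_cases hxa : x = a <;> by_cases hya : y = a
      · rw [hxa, hya]
      · subst hxa
        exact absurd ((hσb y (hy.resolve_left hya) hya).1) (by simpa [← hxy] using hb)
      · subst hya
        exact absurd ((hσb x (hx.resolve_left hxa) hxa).1) (by simpa [hxy] using hb)
      · simp only [Function.update_of_ne hxa, Function.update_of_ne hya] at hxy
        exact hσ (hx.resolve_left hxa) (hy.resolve_left hya) hxy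
    · by_cases hxa : x = a
      · subst hxa
        simpa using hab
      · have := hσb x ((List.mem_cons.1 hx).resolve_left hxa) hxa
        exact ⟨List.mem_cons_of_mem _ this.1, this.2⟩
  | cons_right _ ih =>
    obtain ⟨σ, hσ, hσR⟩ := ih (List.nodup_cons.1 hl₂).2
    exact ⟨σ, hσ, fun a ha => ⟨List.mem_cons_of_mem _ (hσR a ha).1, (hσR a ha).2⟩⟩

namespace FirstOrder.Language.BoundedFormula

variable {L : Language} {α β : Type*} {n : ℕ}

theorem isQF_iInf [Finite β] {f : β → L.BoundedFormula α n} (hf : ∀ b, (f b).IsQF) :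
    (iInf f).IsQF := by
  let _ := Fintype.ofFinite β
  suffices ∀ l : List β, (l.map f).foldr (· ⊓ ·) ⊤ |>.IsQF from this _
  intro l
  induction l with
  | nil => exact IsQF.top
  | cons b l ih => exact (hf b).inf ih

theorem isQF_iSup [Finite β] {f : β → L.BoundedFormula α n} (hf : ∀ b, (f b).IsQF) :
    (iSup f).IsQF := by
  let _ := Fintype.ofFinite β
  suffices ∀ l : List β, (l.map f).foldr (· ⊔ ·) ⊥ |>.IsQF from this _
  intro l
  induction l with
  | nil => exact isQF_bot
  | cons b l ih => exact (hf b).sup ih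

end FirstOrder.Language.BoundedFormula

open BoundedFormula

theorem gsat_exs_iSup {W : Type} {β : Type*} [Finite β] (H : SimpleGraph W) {n : ℕ}
    (θ : β → Language.graph.BoundedFormula Empty n) :
    GSat H (iSup θ).exs ↔ ∃ b, GSat H (θ b).exs := by
  let _ := H.structure
  unfold GSat Sentence.Realize
  simp only [realize_exs, realize_iSup]
  exact exists_comm

noncomputable def embDiagram {V₀ : Type} [Finite V₀] (G₀ : SimpleGraph V₀) {n : ℕ}
    (ι : V₀ → Fin n) : Language.graph.BoundedFormula Empty n :=
  letI := Classical.decRel G₀.Adj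
  let x : V₀ → Language.graph.Term (Empty ⊕ Fin n) := fun u => Term.var (Sum.inr (ι u))
  (iInf fun p : V₀ × V₀ => if G₀.Adj p.1 p.2 then adj.boundedFormula₂ (x p.1) (x p.2)
      else ∼(adj.boundedFormula₂ (x p.1) (x p.2))) ⊓
    iInf fun p : {p : V₀ × V₀ // p.1 ≠ p.2} => ∼((x p.1.1).bdEqual (x p.1.2))

theorem isQF_embDiagram {V₀ : Type} [Finite V₀] (G₀ : SimpleGraph V₀) {n : ℕ}
    (ι : V₀ → Fin n) : (embDiagram G₀ ι).IsQF := by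
  refine (isQF_iInf fun p => ?_).inf (isQF_iInf fun p => (IsAtomic.equal _ _).isQF.not)
  split_ifs
  exacts [(IsAtomic.rel _ _).isQF, (IsAtomic.rel _ _).isQF.not]

theorem gsat_exs_embDiagram_iff {V₀ W : Type} [Finite V₀] [Nonempty W] (G₀ : SimpleGraph V₀)
    (H : SimpleGraph W) {n : ℕ} {ι : V₀ → Fin n} (hι : Function.Injective ι) :
    GSat H (embDiagram G₀ ι).exs ↔ Nonempty (G₀ ↪g H) := by
  let _ := H.structure
  have realize_iff : ∀ xs : Fin n → W, (embDiagram G₀ ι).Realize default xs ↔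
      (∀ u v, H.Adj (xs (ι u)) (xs (ι v)) ↔ G₀.Adj u v) ∧ Function.Injective (xs ∘ ι) := by
    intro xs
    simp only [embDiagram, realize_inf, realize_iInf, realize_not, realize_bdEqual,
      Term.realize_var, Sum.elim_inr, Subtype.forall, Prod.forall]
    refine and_congr (forall₂_congr fun u v => ?_) ⟨fun h u v huv => not_imp_not.1 (h u v) huv,
      fun h u v huv hxs => huv (h hxs)⟩
    split_ifs with hadj <;> simp [realize_rel₂, hadj] <;> rfl
  unfold GSat Sentence.Realize
  simp only [realize_exs, realize_iff]
  constructor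
  · rintro ⟨xs, hadj, hinj⟩
    exact ⟨⟨⟨xs ∘ ι, hinj⟩, hadj _ _⟩⟩
  · rintro ⟨e⟩
    obtain ⟨xs, hxs⟩ : ∃ xs : Fin n → W, xs ∘ ι = e :=
      ⟨Function.extend ι e fun _ => Classical.arbitrary W, funext (hι.extend_apply _ _)⟩
    refine ⟨xs, fun u v => ?_, hxs ▸ e.injective⟩
    simp only [← Function.comp_apply (f := xs), hxs, e.map_adj_iff]

theorem exists_isExistentialSentence_gsat_iff_exists_embedding
    (F : Finset (Σ V : Type, SimpleGraph V)) (hF : ∀ p ∈ F, Finite p.1) :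
    ∃ ψ : Language.graph.Sentence, IsExistentialSentence ψ ∧
      ∀ (W : Type) [Nonempty W] (H : SimpleGraph W),
        GSat H ψ ↔ ∃ p ∈ F, Nonempty (p.2 ↪g H) := by
  have _ : ∀ p : F, Finite p.1.1 := fun p => hF p.1 p.2
  let N := F.sup fun p => Nat.card p.1
  have hι : ∀ p : F, ∃ ι : p.1.1 → Fin N, Function.Injective ι := fun p => by
    let _ := Fintype.ofFinite p.1.1
    obtain ⟨ι⟩ := Function.Embedding.nonempty_of_card_le (α := p.1.1) (β := Fin N) <| by
      simpa [Nat.card_eq_fintype_card] using Finset.le_sup (f := fun p => Nat.card p.1) p.2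
    exact ⟨ι, ι.injective⟩
  choose ι hι using hι
  let θ := iSup fun p : F => embDiagram p.1.2 (ι p)
  refine ⟨θ.exs, ⟨N, θ, isQF_iSup fun p => isQF_embDiagram _ _, rfl⟩, fun W _ H => ?_⟩
  simp only [θ, gsat_exs_iSup, gsat_exs_embDiagram_iff _ _ (hι _), Subtype.exists, exists_prop]

theorem exists_isExistentialSentence_of_partiallyWellOrderedOn
    (C : ∀ V : Type, SimpleGraph V → Prop) (hC : ∀ V G, C V G → Finite V ∧ Nonempty V)
    (hpwo : {p : Σ V : Type, SimpleGraph V | C p.1 p.2}.PartiallyWellOrderedOn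
      fun p q => Nonempty (p.2 ↪g q.2))
    (φ : Language.graph.Sentence)
    (hpres : ∀ (V W : Type) (G : SimpleGraph V) (H : SimpleGraph W),
      C V G → C W H → (G ↪g H) → GSat G φ → GSat H φ) :
    ∃ ψ : Language.graph.Sentence, IsExistentialSentence ψ ∧
      ∀ (V : Type) (G : SimpleGraph V), C V G → (GSat G φ ↔ GSat G ψ) := by
  obtain ⟨F, hFmodels, hFbasis⟩ := (hpwo.mono fun p (hp : C p.1 p.2 ∧ GSat p.2 φ) => hp.1)
    |>.exists_finset_basis
  obtain ⟨ψ, hψ, hψF⟩ := exists_isExistentialSentence_gsat_iff_exists_embedding F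
    fun p hp => (hC _ _ (hFmodels hp).1).1
  refine ⟨ψ, hψ, fun V G hG => ?_⟩
  have _ := (hC V G hG).2
  rw [hψF]
  constructor
  · exact fun hφ => hFbasis ⟨V, G⟩ ⟨hG, hφ⟩
  · rintro ⟨p, hp, ⟨e⟩⟩
    exact hpres _ _ _ _ (hFmodels hp).1 hG e (hFmodels hp).2

@[simp]
theorem flipWithin_adj {V : Type} {H : SimpleGraph V} {X : Set V} {x y : V} :
    (flipWithin H X).Adj x y ↔ x ≠ y ∧ ¬(H.Adj x y ↔ x ∈ X ∧ y ∈ X) :=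
  Iff.rfl

theorem DSum.finite_nonempty {Q : ∀ V : Type, SimpleGraph V → Prop}
    (hQ : ∀ V G, Q V G → Finite V ∧ Nonempty V) {V : Type} {G : SimpleGraph V}
    (h : DSum Q V G) : Finite V ∧ Nonempty V := by
  induction h with
  | of hG => exact hQ _ _ hG
  | union _ _ ih₁ ih₂ =>
    have := ih₁.1
    have := ih₂.1
    exact ⟨inferInstance, ⟨.inl ih₁.2.some⟩⟩

theorem SCk.finite_nonempty {k : ℕ} {V : Type} {G : SimpleGraph V} (hG : SCk k V G) :
    Finite V ∧ Nonempty V := by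
  induction k generalizing V G with
  | zero =>
    obtain ⟨e⟩ := hG
    exact ⟨.of_equiv _ e.toEquiv.symm, ⟨e.symm ()⟩⟩
  | succ k ih =>
    obtain ⟨W, H, X, hH, ⟨e⟩⟩ := hG
    obtain ⟨_, ⟨w⟩⟩ := hH.finite_nonempty fun _ _ => ih
    exact ⟨.of_equiv _ e.toEquiv.symm, ⟨e.symm w⟩⟩

namespace SCk

/-- A vertex code: the path lists, from the outermost level inwards, the index of the summand
containing the vertex and whether the vertex lies in the flipped set at that level; the tags keep
the flip bits of outer levels that have been stripped off. -/
abbrev Code : Type := List (ℕ × Bool) × List Bool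

/-- Vertices in different summands are adjacent iff both are flipped; in the same summand the
inner adjacency is complemented iff both are flipped. -/
def pathAdj : List (ℕ × Bool) → List (ℕ × Bool) → Bool
  | (i, a) :: p, (j, b) :: q => if i = j then xor (pathAdj p q) (a && b) else a && b
  | _, _ => false

theorem pathAdj_comm : ∀ p q, pathAdj p q = pathAdj q p
  | (i, a) :: p, (j, b) :: q => by
    simp only [pathAdj, pathAdj_comm p q, Bool.and_comm a b, eq_comm (a := i)]
  | [], [] | [], _ :: _ | _ :: _, [] => rfl

theorem pathAdj_congr {p q p' q' : List (ℕ × Bool)}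
    (hp : p'.map Prod.snd = p.map Prod.snd) (hq : q'.map Prod.snd = q.map Prod.snd)
    (htake : ∀ j, (p'.map Prod.fst).take j = (q'.map Prod.fst).take j ↔
      (p.map Prod.fst).take j = (q.map Prod.fst).take j) :
    pathAdj p q = pathAdj p' q' := by
  induction p generalizing q p' q' with
  | nil =>
    obtain rfl : p' = [] := by simpa using hp
    rfl
  | cons x p ih =>
    obtain ⟨i, a⟩ := x
    obtain _ | ⟨⟨j, b⟩, q⟩ := q
    · obtain rfl : q' = [] := by simpa using hq
      obtain _ | ⟨⟨i', a'⟩, p'⟩ := p' <;> rfl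
    obtain _ | ⟨⟨i', a'⟩, p'⟩ := p'
    · simp at hp
    obtain _ | ⟨⟨j', b'⟩, q'⟩ := q'
    · simp at hq
    simp only [List.map_cons, List.cons.injEq] at hp hq
    have hhead : i' = j' ↔ i = j := by simpa using htake 1
    simp only [pathAdj, hp.1, hq.1]
    by_cases hij : i = j
    · have htail : ∀ j, (p'.map Prod.fst).take j = (q'.map Prod.fst).take j ↔
          (p.map Prod.fst).take j = (q.map Prod.fst).take j := fun j => by
        simpa [hij, hhead.2 hij] using htake (j + 1)
      rw [if_pos hij, if_pos (hhead.2 hij), ih hp.2 hq.2 htail]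
    · rw [if_neg hij, if_neg (mt hhead.1 hij)]

structure IsCodeSet (k m : ℕ) (S : Finset Code) : Prop where
  nonempty : S.Nonempty
  length_path : ∀ v ∈ S, v.1.length = k
  length_tags : ∀ v ∈ S, v.2.length = m
  eq_of_map_fst_eq : ∀ u ∈ S, ∀ v ∈ S, u.1.map Prod.fst = v.1.map Prod.fst → u = v

def codeGraph (S : Finset Code) : SimpleGraph S where
  Adj u v := u ≠ v ∧ pathAdj u.1.1 v.1.1
  symm := ⟨fun u v h => ⟨h.1.symm, pathAdj_comm v.1.1 u.1.1 ▸ h.2⟩⟩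
  loopless := ⟨fun _ h => h.1 rfl⟩

structure IsCodeEmb (S T : Finset Code) (f : Code → Code) : Prop where
  mapsTo : Set.MapsTo f S T
  injOn : Set.InjOn f S
  tags_eq : ∀ v ∈ S, (f v).2 = v.2
  map_snd_eq : ∀ v ∈ S, (f v).1.map Prod.snd = v.1.map Prod.snd
  take_eq_iff : ∀ u ∈ S, ∀ v ∈ S, ∀ j, ((f u).1.map Prod.fst).take j =
    ((f v).1.map Prod.fst).take j ↔ (u.1.map Prod.fst).take j = (v.1.map Prod.fst).take j

def CodeEmbeds (S T : Finset Code) : Prop := ∃ f, IsCodeEmb S T f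

theorem CodeEmbeds.refl (S : Finset Code) : CodeEmbeds S S :=
  ⟨id, Set.mapsTo_id _, Set.injOn_id _, fun _ _ => rfl, fun _ _ => rfl, fun _ _ _ _ _ => .rfl⟩

theorem CodeEmbeds.trans {S T U : Finset Code} : CodeEmbeds S T → CodeEmbeds T U →
    CodeEmbeds S U := by
  rintro ⟨f, hf⟩ ⟨g, hg⟩
  refine ⟨g ∘ f, hg.mapsTo.comp hf.mapsTo, hg.injOn.comp hf.injOn hf.mapsTo,
    fun v hv => ?_, fun v hv => ?_, fun u hu v hv j => ?_⟩
  · exact (hg.tags_eq _ (hf.mapsTo hv)).trans (hf.tags_eq v hv)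
  · exact (hg.map_snd_eq _ (hf.mapsTo hv)).trans (hf.map_snd_eq v hv)
  · exact (hg.take_eq_iff _ (hf.mapsTo hu) _ (hf.mapsTo hv) j).trans (hf.take_eq_iff u hu v hv j)

instance : IsPreorder (Finset Code) CodeEmbeds where
  refl := CodeEmbeds.refl
  trans _ _ _ := CodeEmbeds.trans

theorem CodeEmbeds.nonempty_embedding {S T : Finset Code} (h : CodeEmbeds S T) :
    Nonempty (codeGraph S ↪g codeGraph T) := by
  obtain ⟨f, hf⟩ := h
  refine ⟨⟨⟨fun v => ⟨f v, hf.mapsTo v.2⟩, fun u v huv => Subtype.ext <|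
    hf.injOn u.2 v.2 (congrArg Subtype.val huv)⟩, fun {u v} => ?_⟩⟩
  have hpath : pathAdj (f u).1 (f v).1 = pathAdj u.1.1 v.1.1 :=
    (pathAdj_congr (hf.map_snd_eq _ u.2) (hf.map_snd_eq _ v.2)
      (hf.take_eq_iff _ u.2 _ v.2)).symm
  change ((⟨f u, hf.mapsTo u.2⟩ : T) ≠ ⟨f v, hf.mapsTo v.2⟩ ∧ pathAdj (f u).1 (f v).1) ↔
    (u ≠ v ∧ pathAdj u.1.1 v.1.1)
  rw [hpath, Ne, Subtype.mk.injEq, hf.injOn.eq_iff u.2 v.2, ← Subtype.ext_iff]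

def headIdx (v : Code) : ℕ := v.1.headI.1

def stripHead (v : Code) : Code := (v.1.tail, v.1.headI.2 :: v.2)

def pushHead (i : ℕ) (v : Code) : Code := ((i, v.2.headI) :: v.1, v.2.tail)

def heads (S : Finset Code) : Finset ℕ := S.image headIdx

def summand (S : Finset Code) (i : ℕ) : Finset Code := {v ∈ S | headIdx v = i}.image stripHead

def summands (S : Finset Code) : List (Finset Code) :=
  ((heads S).sort (· ≤ ·)).map (summand S)

theorem pushHead_stripHead {v : Code} (hv : v.1 ≠ []) : pushHead (headIdx v) (stripHead v) = v := by
  obtain ⟨_ | ⟨⟨i, a⟩, p⟩, t⟩ := v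
  exacts [absurd rfl hv, rfl]

theorem stripHead_pushHead {i : ℕ} {v : Code} (hv : v.2 ≠ []) : stripHead (pushHead i v) = v := by
  obtain ⟨p, _ | ⟨a, t⟩⟩ := v
  exacts [absurd rfl hv, rfl]

theorem pushHead_inj {i j : ℕ} {v w : Code} (hv : v.2 ≠ []) (hw : w.2 ≠ []) :
    pushHead i v = pushHead j w ↔ i = j ∧ v = w := by
  refine ⟨fun h => ⟨congrArg headIdx h, ?_⟩, fun h => h.1 ▸ h.2 ▸ rfl⟩
  rw [← stripHead_pushHead (i := i) hv, ← stripHead_pushHead (i := j) hw, h]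

section CodeSet

variable {k m : ℕ} {S T : Finset Code}

theorem IsCodeSet.path_ne_nil (hS : IsCodeSet (k + 1) m S) {v : Code} (hv : v ∈ S) : v.1 ≠ [] :=
  List.ne_nil_of_length_pos (by rw [hS.length_path v hv]; omega)

theorem stripHead_mem_summand {v : Code} (hv : v ∈ S) : stripHead v ∈ summand S (headIdx v) :=
  Finset.mem_image_of_mem _ (Finset.mem_filter.2 ⟨hv, rfl⟩)

theorem IsCodeSet.mem_summand_iff (hS : IsCodeSet (k + 1) m S) {i : ℕ} {v : Code}
    (hv : v.2 ≠ []) : v ∈ summand S i ↔ pushHead i v ∈ S := by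
  refine ⟨fun h => ?_, fun h => ?_⟩
  · obtain ⟨w, hw, rfl⟩ := Finset.mem_image.1 h
    rw [Finset.mem_filter] at hw
    rw [← hw.2, pushHead_stripHead (hS.path_ne_nil hw.1)]
    exact hw.1
  · have hidx : headIdx (pushHead i v) = i := rfl
    simpa only [stripHead_pushHead hv, hidx] using stripHead_mem_summand h

theorem isCodeSet_summand (hS : IsCodeSet (k + 1) m S) {i : ℕ} (hi : i ∈ heads S) :
    IsCodeSet k (m + 1) (summand S i) := by
  have mem_iff : ∀ {v}, v ∈ summand S i ↔ ∃ w ∈ S, headIdx w = i ∧ stripHead w = v := by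
    simp [summand, and_assoc]
  obtain ⟨w, hw, rfl⟩ := Finset.mem_image.1 hi
  refine ⟨⟨_, stripHead_mem_summand hw⟩, fun v' hv' => ?_, fun v' hv' => ?_,
    fun u' hu' v' hv' h => ?_⟩
  · obtain ⟨v, hv, -, rfl⟩ := mem_iff.1 hv'
    simp [stripHead, hS.length_path v hv]
  · obtain ⟨v, hv, -, rfl⟩ := mem_iff.1 hv'
    simp [stripHead, hS.length_tags v hv]
  · obtain ⟨u, hu, hui, rfl⟩ := mem_iff.1 hu'
    obtain ⟨v, hv, hvi, rfl⟩ := mem_iff.1 hv'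
    have hvu := hvi.trans hui.symm
    suffices u = v by rw [this]
    refine hS.eq_of_map_fst_eq _ hu _ hv ?_
    rw [← pushHead_stripHead (hS.path_ne_nil hu), ← pushHead_stripHead (hS.path_ne_nil hv)]
    simp [pushHead, hvu, h]

theorem IsCodeSet.codeEmbeds_of_summand (hS : IsCodeSet (k + 1) m S)
    (hT : IsCodeSet (k + 1) m T) {σ : ℕ → ℕ} (hσ : Set.InjOn σ (heads S))
    (h : ∀ i ∈ heads S, CodeEmbeds (summand S i) (summand T (σ i))) : CodeEmbeds S T := by
  choose! g hg using h
  have hhead : ∀ {v}, v ∈ S → headIdx v ∈ heads S := Finset.mem_image_of_mem _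
  have htags : ∀ {v}, v ∈ S → (g (headIdx v) (stripHead v)).2 = (stripHead v).2 := fun hv =>
    (hg _ (hhead hv)).tags_eq _ (stripHead_mem_summand hv)
  have hne : ∀ {v}, v ∈ S → (g (headIdx v) (stripHead v)).2 ≠ [] := fun hv => by
    rw [htags hv]
    exact List.cons_ne_nil _ _
  have eq_pushHead : ∀ {v}, v ∈ S → v = pushHead (headIdx v) (stripHead v) := fun hv =>
    (pushHead_stripHead (hS.path_ne_nil hv)).symm
  refine ⟨fun v => pushHead (σ (headIdx v)) (g (headIdx v) (stripHead v)),
    fun v hv => ?_, fun u hu v hv huv => ?_, fun v hv => ?_, fun v hv => ?_,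
    fun u hu v hv j => ?_⟩
  · exact (hT.mem_summand_iff (hne hv)).1
      ((hg _ (hhead hv)).mapsTo (stripHead_mem_summand hv))
  · obtain ⟨hσuv, hguv⟩ := (pushHead_inj (hne hu) (hne hv)).1 huv
    have hi := hσ (hhead hu) (hhead hv) hσuv
    rw [hi] at hguv
    rw [eq_pushHead hu, eq_pushHead hv, hi, (hg _ (hhead hv)).injOn (hi ▸ stripHead_mem_summand hu)
      (stripHead_mem_summand hv) hguv]
  · change (g _ _).2.tail = v.2
    rw [htags hv]
    rfl
  · conv_rhs => rw [eq_pushHead hv]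
    simp only [pushHead, List.map_cons, htags hv,
      (hg _ (hhead hv)).map_snd_eq _ (stripHead_mem_summand hv)]
  · conv_rhs => rw [eq_pushHead hu, eq_pushHead hv]
    cases j with
    | zero => simp
    | succ j =>
      simp only [pushHead, List.map_cons, List.take_succ_cons, List.cons.injEq]
      by_cases hi : headIdx u = headIdx v
      · rw [hi]
        simpa only [true_and] using (hg _ (hhead hv)).take_eq_iff _
          (hi ▸ stripHead_mem_summand hu) _ (stripHead_mem_summand hv) j
      · simp [hi, hσ.ne_iff (hhead hu) (hhead hv)]

theorem IsCodeSet.codeEmbeds_of_sublistForall₂ (hS : IsCodeSet (k + 1) m S)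
    (hT : IsCodeSet (k + 1) m T) (h : List.SublistForall₂ CodeEmbeds (summands S) (summands T)) :
    CodeEmbeds S T := by
  obtain ⟨σ, hσ, hσR⟩ := h.of_map.exists_injOn (Finset.sort_nodup _ _)
  exact hS.codeEmbeds_of_summand hT (hσ.mono fun i hi => (Finset.mem_sort _).2 hi)
    fun i hi => (hσR i ((Finset.mem_sort _).2 hi)).2

theorem isCodeSet_zero_eq_singleton (hS : IsCodeSet 0 m S) :
    ∃ t : List Bool, t.length = m ∧ S = {([], t)} := by
  obtain ⟨v, hv⟩ := hS.nonempty
  have path_eq_nil : ∀ u ∈ S, u.1 = [] := fun u hu =>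
    List.eq_nil_of_length_eq_zero (hS.length_path u hu)
  have hv' : v = ([], v.2) := Prod.ext (path_eq_nil v hv) rfl
  refine ⟨v.2, hS.length_tags v hv, Finset.eq_singleton_iff_unique_mem.2 ⟨hv' ▸ hv, ?_⟩⟩
  intro u hu
  rw [← hv']
  exact hS.eq_of_map_fst_eq u hu v hv <| by rw [path_eq_nil u hu, path_eq_nil v hv]

theorem partiallyWellOrderedOn_isCodeSet :
    ∀ k m, {S | IsCodeSet k m S}.PartiallyWellOrderedOn CodeEmbeds
  | 0, m => Set.Finite.partiallyWellOrderedOn <|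
      ((List.finite_length_eq Bool m).image fun t => ({([], t)} : Finset Code)).subset
        fun _ hS => by
          obtain ⟨t, ht, rfl⟩ := isCodeSet_zero_eq_singleton hS
          exact ⟨t, ht, rfl⟩
  | k + 1, m => by
    rw [Set.partiallyWellOrderedOn_iff_exists_lt]
    intro f hf
    have hsummands : ∀ n, ∀ X ∈ summands (f n), X ∈ {S | IsCodeSet k (m + 1) S} := by
      intro n X hX
      obtain ⟨i, hi, rfl⟩ := List.mem_map.1 hX
      exact isCodeSet_summand (hf n) ((Finset.mem_sort _).1 hi)
    obtain ⟨a, b, hab, h⟩ := ((partiallyWellOrderedOn_isCodeSet k (m + 1))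
      |>.partiallyWellOrderedOn_sublistForall₂ CodeEmbeds).exists_lt hsummands
    exact ⟨a, b, hab, (hf a).codeEmbeds_of_sublistForall₂ (hf b) h⟩

end CodeSet

theorem pathAdj_modifyHead {g : ℕ → ℕ} (hg : g.Injective) (p q : List (ℕ × Bool)) :
    pathAdj (p.modifyHead (Prod.map g id)) (q.modifyHead (Prod.map g id)) = pathAdj p q := by
  rcases p with _ | ⟨⟨i, a⟩, p⟩ <;> rcases q with _ | ⟨⟨j, b⟩, q⟩ <;> simp [pathAdj, hg.eq_iff]

theorem pathAdj_modifyHead_of_ne {g g' : ℕ → ℕ} (hgg' : ∀ x y, g x ≠ g' y)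
    (p q : List (ℕ × Bool)) :
    pathAdj (p.modifyHead (Prod.map g id)) (q.modifyHead (Prod.map g' id)) =
      (p.headI.2 && q.headI.2) := by
  rcases p with _ | ⟨⟨i, a⟩, p⟩ <;> rcases q with _ | ⟨⟨j, b⟩, q⟩
  · rfl
  · rfl
  · cases a <;> rfl
  · simp [pathAdj, hgg']

theorem headI_modifyHead_snd (g : ℕ → ℕ) (p : List (ℕ × Bool)) :
    (p.modifyHead (Prod.map g id)).headI.2 = p.headI.2 := by
  rcases p with _ | ⟨⟨i, a⟩, p⟩ <;> rfl

theorem map_fst_modifyHead_inj {g : ℕ → ℕ} (hg : g.Injective) {p q : List (ℕ × Bool)} :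
    (p.modifyHead (Prod.map g id)).map Prod.fst = (q.modifyHead (Prod.map g id)).map Prod.fst ↔
      p.map Prod.fst = q.map Prod.fst := by
  rcases p with _ | ⟨⟨i, a⟩, p⟩ <;> rcases q with _ | ⟨⟨j, b⟩, q⟩ <;> simp [hg.eq_iff]

theorem map_fst_modifyHead_ne {g g' : ℕ → ℕ} (hgg' : ∀ x y, g x ≠ g' y)
    {p q : List (ℕ × Bool)} (hp : p ≠ []) :
    (p.modifyHead (Prod.map g id)).map Prod.fst ≠ (q.modifyHead (Prod.map g' id)).map Prod.fst := by
  rcases p with _ | ⟨⟨i, a⟩, p⟩ <;> rcases q with _ | ⟨⟨j, b⟩, q⟩ <;> simp_all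

structure IsPathCoding {V : Type} (k : ℕ) (G : SimpleGraph V) (c : V → List (ℕ × Bool)) :
    Prop where
  length_eq : ∀ v, (c v).length = k
  injective : Function.Injective fun v => (c v).map Prod.fst
  adj_iff : ∀ u v, G.Adj u v ↔ u ≠ v ∧ pathAdj (c u) (c v)

section Coding

variable {k : ℕ} {V W : Type}

theorem isPathCoding_bot_unit : IsPathCoding 0 (⊥ : SimpleGraph Unit) fun _ => [] where
  length_eq _ := rfl
  injective _ _ _ := rfl
  adj_iff _ _ := by simp [pathAdj]

theorem IsPathCoding.comp_iso {G : SimpleGraph V} {G' : SimpleGraph W}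
    {c : W → List (ℕ × Bool)} (hc : IsPathCoding k G' c) (e : G ≃g G') :
    IsPathCoding k G (c ∘ e) where
  length_eq v := hc.length_eq (e v)
  injective := hc.injective.comp e.injective
  adj_iff u v := by rw [← e.map_adj_iff, hc.adj_iff, e.injective.ne_iff]; rfl

open scoped Classical in
theorem IsPathCoding.flip {H : SimpleGraph W} {c : W → List (ℕ × Bool)}
    (hc : IsPathCoding k H c) (X : Set W) :
    IsPathCoding (k + 1) (flipWithin H X) fun w => (0, decide (w ∈ X)) :: c w where
  length_eq w := by simp [hc.length_eq]
  injective u v h := hc.injective (by simpa using h)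
  adj_iff u v := by
    by_cases huv : u = v
    · simp [huv]
    · simp only [flipWithin_adj, hc.adj_iff, pathAdj, if_true, ne_eq, huv, not_false_eq_true,
        true_and]
      cases pathAdj (c u) (c v) <;> simp [imp_iff_not_or]

theorem IsPathCoding.sum {W₁ W₂ : Type} {H₁ : SimpleGraph W₁} {H₂ : SimpleGraph W₂}
    {X : Set (W₁ ⊕ W₂)} {c₁ : W₁ → List (ℕ × Bool)} {c₂ : W₂ → List (ℕ × Bool)}
    (h₁ : IsPathCoding (k + 1) (flipWithin H₁ (Sum.inl ⁻¹' X)) c₁)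
    (h₂ : IsPathCoding (k + 1) (flipWithin H₂ (Sum.inr ⁻¹' X)) c₂)
    (hc₁ : ∀ w, (c₁ w).headI.2 = true ↔ Sum.inl w ∈ X)
    (hc₂ : ∀ w, (c₂ w).headI.2 = true ↔ Sum.inr w ∈ X) :
    IsPathCoding (k + 1) (flipWithin (H₁ ⊕g H₂) X) (Sum.elim
      (fun w => (c₁ w).modifyHead (Prod.map (2 * ·) id))
      (fun w => (c₂ w).modifyHead (Prod.map (2 * · + 1) id))) := by
  have hne : ∀ x y : ℕ, 2 * x ≠ 2 * y + 1 := by omega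
  have hinj₁ : (2 * ·).Injective := fun x y h => by simpa using h
  have hinj₂ : (2 * · + 1).Injective := fun x y h => by simpa using h
  refine ⟨by rintro (w | w) <;> simp [h₁.length_eq, h₂.length_eq], ?_, ?_⟩
  · have hne_nil₁ w : c₁ w ≠ [] := List.ne_nil_of_length_pos (by simp [h₁.length_eq])
    rintro (u | u) (v | v) huv <;> simp only [Sum.elim_inl, Sum.elim_inr] at huv
    · exact congrArg _ (h₁.injective ((map_fst_modifyHead_inj hinj₁).1 huv))
    · exact absurd huv (map_fst_modifyHead_ne hne (hne_nil₁ u))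
    · exact absurd huv.symm (map_fst_modifyHead_ne hne (hne_nil₁ v))
    · exact congrArg _ (h₂.injective ((map_fst_modifyHead_inj hinj₂).1 huv))
  · rintro (u | u) (v | v)
    · simpa [pathAdj_modifyHead hinj₁] using h₁.adj_iff u v
    · simp [pathAdj_modifyHead_of_ne hne, hc₁, hc₂]
    · simp [pathAdj_modifyHead_of_ne (fun x y => (hne y x).symm), hc₁, hc₂, and_comm]
    · simpa [pathAdj_modifyHead hinj₂] using h₂.adj_iff u v

theorem exists_isPathCoding_flipWithin (ih : ∀ V (G : SimpleGraph V), SCk k V G →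
      ∃ c, IsPathCoding k G c) {H : SimpleGraph W} (hH : DSum (SCk k) W H) (X : Set W) :
    ∃ c, IsPathCoding (k + 1) (flipWithin H X) c ∧ ∀ w, (c w).headI.2 = true ↔ w ∈ X := by
  induction hH with
  | of hG =>
    obtain ⟨c, hc⟩ := ih _ _ hG
    exact ⟨_, hc.flip X, fun _ => by simp⟩
  | union _ _ ih₁ ih₂ =>
    obtain ⟨c₁, h₁, hc₁⟩ := ih₁ (Sum.inl ⁻¹' X)
    obtain ⟨c₂, h₂, hc₂⟩ := ih₂ (Sum.inr ⁻¹' X)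
    refine ⟨_, h₁.sum h₂ hc₁ hc₂, ?_⟩
    rintro (w | w) <;> simp [headI_modifyHead_snd, hc₁, hc₂]

theorem exists_isPathCoding {G : SimpleGraph V} (hG : SCk k V G) : ∃ c, IsPathCoding k G c := by
  induction k generalizing V with
  | zero =>
    obtain ⟨e⟩ := hG
    exact ⟨_, isPathCoding_bot_unit.comp_iso e⟩
  | succ k ih =>
    obtain ⟨W, H, X, hH, ⟨e⟩⟩ := hG
    obtain ⟨c, hc, -⟩ := exists_isPathCoding_flipWithin (fun _ _ => ih) hH X
    exact ⟨_, hc.comp_iso e⟩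

theorem IsPathCoding.exists_isCodeSet [Finite V] [Nonempty V] {G : SimpleGraph V}
    {c : V → List (ℕ × Bool)} (hc : IsPathCoding k G c) :
    ∃ S, IsCodeSet k 0 S ∧ Nonempty (G ≃g codeGraph S) := by
  classical
  let _ := Fintype.ofFinite V
  let code : V → Code := fun v => (c v, [])
  have mem_iff : ∀ {x}, x ∈ Finset.univ.image code ↔ ∃ v, code v = x := by simp
  refine ⟨Finset.univ.image code, ⟨Finset.univ_nonempty.image _, fun x hx => ?_, fun x hx => ?_,
    fun x hx y hy hxy => ?_⟩, ⟨?_⟩⟩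
  · obtain ⟨v, rfl⟩ := mem_iff.1 hx
    exact hc.length_eq v
  · obtain ⟨v, rfl⟩ := mem_iff.1 hx
    rfl
  · obtain ⟨u, rfl⟩ := mem_iff.1 hx
    obtain ⟨v, rfl⟩ := mem_iff.1 hy
    rw [hc.injective hxy]
  · let f : V → Finset.univ.image code := fun v => ⟨code v, mem_iff.2 ⟨v, rfl⟩⟩
    have hf : f.Injective := fun u v h => hc.injective <| by
      simp only [f, code, Subtype.mk.injEq, Prod.mk.injEq, and_true] at h
      simp only [h]
    refine ⟨Equiv.ofBijective f ⟨hf, fun x => ?_⟩, fun {u v} => ?_⟩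
    · obtain ⟨v, hv⟩ := mem_iff.1 x.2
      exact ⟨v, Subtype.ext hv⟩
    · change f u ≠ f v ∧ pathAdj (c u) (c v) ↔ G.Adj u v
      rw [hf.ne_iff, hc.adj_iff]

theorem partiallyWellOrderedOn_setOf (k : ℕ) :
    {p : Σ V : Type, SimpleGraph V | SCk k p.1 p.2}.PartiallyWellOrderedOn
      fun p q => Nonempty (p.2 ↪g q.2) := by
  rw [Set.partiallyWellOrderedOn_iff_exists_lt]
  intro f hf
  have hcode n : ∃ S, IsCodeSet k 0 S ∧ Nonempty ((f n).2 ≃g codeGraph S) := by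
    obtain ⟨_, _⟩ := finite_nonempty (hf n)
    obtain ⟨c, hc⟩ := exists_isPathCoding (hf n)
    exact hc.exists_isCodeSet
  choose S hS e using hcode
  obtain ⟨a, b, hab, hemb⟩ := (partiallyWellOrderedOn_isCodeSet k 0).exists_lt hS
  obtain ⟨ι⟩ := hemb.nonempty_embedding
  exact ⟨a, b, hab, ⟨(e a).some.toEmbedding.trans (ι.trans (e b).some.symm.toEmbedding)⟩⟩

end Coding

end SCk

/-- Extension preservation holds over `SC(k)`: every sentence preserved by embeddings over
`SC(k)` is equivalent over `SC(k)` to an existential sentence. -/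
theorem stmt_16 (k : ℕ) (φ : Language.graph.Sentence)
    (hpres : ∀ (V W : Type) [Fintype V] [Fintype W] (G : SimpleGraph V) (H : SimpleGraph W),
      SCk k V G → SCk k W H → (G ↪g H) → GSat G φ → GSat H φ) :
    ∃ ψ : Language.graph.Sentence, IsExistentialSentence ψ ∧
      ∀ (V : Type) [Fintype V] (G : SimpleGraph V),
        SCk k V G → (GSat G φ ↔ GSat G ψ) := by
  have hpres' : ∀ (V W : Type) (G : SimpleGraph V) (H : SimpleGraph W),
      SCk k V G → SCk k W H → (G ↪g H) → GSat G φ → GSat H φ := fun V W G H hG hH => by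
    have := (SCk.finite_nonempty hG).1
    have := (SCk.finite_nonempty hH).1
    let _ := Fintype.ofFinite V
    let _ := Fintype.ofFinite W
    exact hpres V W G H hG hH
  obtain ⟨ψ, hψ, hφψ⟩ := exists_isExistentialSentence_of_partiallyWellOrderedOn (SCk k)
    (fun _ _ => SCk.finite_nonempty) (SCk.partiallyWellOrderedOn_setOf k) φ hpres'
  exact ⟨ψ, hψ, fun V _ G => hφψ V G⟩
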